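/- arXiv:2205.04130 — 3 statements merged into one kernel-verified Lean document; each statement's English description precedes it below -/
import Mathlib

section
/- Let X be a Banach space, A a linear operator on X, b ∈ X, B ∈ L(ℂ,X) defined by Bu = b·u, and F ∈ L(X,ℂ). For every n ≥ 1: if x ∈ D(Aⁿ) and b ∈ D(A^{n-1}), then x ∈ D((A+BF)ⁿ) and (A+BF)ⁿ x = Aⁿ x + q_{n-1} A^{n-1} b + ⋯ + q₀ b, where q_m = F (A+BF)^{n-m-1} x ∈ ℂ for m = 0,…,n-1. -/
/-- `IterRel D A n x y` means that `x` belongs to the domain of the `n`-th power of the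
(possibly unbounded) linear operator `A` with domain `D`, and `Aⁿ x = y`. -/
inductive IterRel {X : Type*} [NormedAddCommGroup X] [NormedSpace ℂ X]
    (D : Submodule ℂ X) (A : D →ₗ[ℂ] X) : ℕ → X → X → Prop
  | zero (x : X) : IterRel D A 0 x x
  | succ (n : ℕ) (x y : X) (hy : y ∈ D) :
      IterRel D A n x y → IterRel D A (n + 1) x (A ⟨y, hy⟩)

/-!
Regard `A` as the linear partial map `⟨D, A⟩` and `A + BF` as `⟨D, A + BF⟩`. The graph of a linear
partial map is a subspace, so from `(A + BF)ⁿ x = Aⁿ x + ∑ q_m Aᵐ b` and `Aᵐ b ↦ Aᵐ⁺¹ b` one more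
application of `A + BF` gives `Aⁿ⁺¹ x + ∑ q_m Aᵐ⁺¹ b + F((A + BF)ⁿ x) b`, which is the formula for
`n + 1` with the new coefficient `q₀ = F((A + BF)ⁿ x)` and the old ones shifted by one.
-/

open LinearPMap Finset

section

variable {X : Type*} [NormedAddCommGroup X] [NormedSpace ℂ X] {D : Submodule ℂ X}
  {A : D →ₗ[ℂ] X}

theorem LinearPMap.mem_graph_add_smulRight (f : X →ₗ[ℂ] ℂ) (b : X) {u v : X}
    (h : (u, v) ∈ (⟨D, A⟩ : X →ₗ.[ℂ] X).graph) :
    (u, v + f u • b) ∈ (⟨D, A + (f.comp D.subtype).smulRight b⟩ : X →ₗ.[ℂ] X).graph := by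
  obtain ⟨u, rfl, rfl⟩ := (mem_graph_iff _).1 h
  exact (mem_graph_iff _).2 ⟨u, rfl, by simp⟩

namespace IterRel

theorem unique : ∀ {n : ℕ} {x y z : X}, IterRel D A n x y → IterRel D A n x z → y = z
  | 0, _, _, _, .zero _, .zero _ => rfl
  | _ + 1, _, _, _, .succ _ _ _ _ hy, .succ _ _ _ _ hz => by obtain rfl := unique hy hz; rfl

theorem succ_iff {n : ℕ} {x y : X} :
    IterRel D A (n + 1) x y ↔ ∃ z, IterRel D A n x z ∧ (z, y) ∈ (⟨D, A⟩ : X →ₗ.[ℂ] X).graph := by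
  constructor
  · rintro (_ | ⟨_, _, z, hz, h⟩)
    exact ⟨z, h, mem_graph ⟨D, A⟩ ⟨z, hz⟩⟩
  · rintro ⟨z, h, hzy⟩
    obtain ⟨⟨z, hz⟩, rfl, rfl⟩ := (mem_graph_iff _).1 hzy
    exact succ n x z hz h

theorem mem_graph_of_succ {n : ℕ} {x y z : X} (hy : IterRel D A (n + 1) x y)
    (hz : IterRel D A n x z) : (z, y) ∈ (⟨D, A⟩ : X →ₗ.[ℂ] X).graph := by
  obtain ⟨z', hz', hz'y⟩ := succ_iff.1 hy
  rwa [hz.unique hz']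

theorem exists_add_smulRight (b : X) (F : X →L[ℂ] ℂ) {n : ℕ} {x xn : X} {bv : ℕ → X}
    (hx : IterRel D A n x xn) (hb : ∀ m < n, IterRel D A m b (bv m)) :
    ∃ (w : X) (q : ℕ → ℂ),
      IterRel D (A + ((F.toLinearMap.comp D.subtype).smulRight b)) n x w ∧
      (∀ m : ℕ, m < n → ∃ z : X,
        IterRel D (A + ((F.toLinearMap.comp D.subtype).smulRight b)) (n - m - 1) x z ∧
        q m = F z) ∧
      w = xn + ∑ m ∈ range n, q m • bv m := by
  induction n generalizing xn with
  | zero =>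
    cases hx
    exact ⟨x, 0, zero x, by simp, by simp⟩
  | succ n ih =>
    obtain ⟨y, hxy, hy⟩ := succ_iff.1 hx
    obtain ⟨w, q, hw, hq, rfl⟩ := ih hxy fun m hm => hb m (by omega)
    have hbv0 : bv 0 = b := (hb 0 n.succ_pos).unique (zero b)
    have hbv : ∀ m ∈ range n, (bv m, bv (m + 1)) ∈ (⟨D, A⟩ : X →ₗ.[ℂ] X).graph :=
      fun m hm => mem_graph_of_succ (hb (m + 1) (by simpa using hm)) (hb m (by simp at hm; omega))
    have hwG : (y + ∑ m ∈ range n, q m • bv m, xn + ∑ m ∈ range n, q m • bv (m + 1)) ∈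
        (⟨D, A⟩ : X →ₗ.[ℂ] X).graph := by
      simpa [Prod.fst_sum, Prod.snd_sum] using
        add_mem hy (sum_mem fun m hm => Submodule.smul_mem _ (q m) (hbv m hm))
    refine ⟨_, fun | 0 => F (y + ∑ m ∈ range n, q m • bv m) | m + 1 => q m,
      succ_iff.2 ⟨_, hw, mem_graph_add_smulRight F.toLinearMap b hwG⟩, ?_, ?_⟩
    · rintro (_ | m) hm
      · exact ⟨_, by simpa using hw, rfl⟩
      · simpa using hq m (by omega)
    · rw [sum_range_succ', hbv0]
      simp only [ContinuousLinearMap.coe_coe]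
      abel

end IterRel

end

theorem power_of_rank_one_perturbation_general
    {X : Type*} [NormedAddCommGroup X] [NormedSpace ℂ X]
    (D : Submodule ℂ X) (A : D →ₗ[ℂ] X) (b : X) (F : X →L[ℂ] ℂ)
    (n : ℕ) (x xn : X) (bv : ℕ → X)
    (hx : IterRel D A n x xn)
    (hb : ∀ m : ℕ, m ≤ n - 1 → IterRel D A m b (bv m)) :
    ∃ (w : X) (q : ℕ → ℂ),
      IterRel D (A + ((F.toLinearMap.comp D.subtype).smulRight b)) n x w ∧
      (∀ m : ℕ, m < n → ∃ z : X,
        IterRel D (A + ((F.toLinearMap.comp D.subtype).smulRight b)) (n - m - 1) x z ∧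
        q m = F z) ∧
      w = xn + ∑ m ∈ Finset.range n, q m • bv m :=
  hx.exists_add_smulRight b F fun m hm => hb m (by omega)

/-- If `x ∈ D(Aⁿ)` and `b ∈ D(A^{n-1})`, then `x ∈ D((A+BF)ⁿ)` and
`(A+BF)ⁿ x = Aⁿ x + q_{n-1} A^{n-1} b + ⋯ + q₀ b` with `q_m = F (A+BF)^{n-m-1} x`,
where `B : ℂ → X` is `u ↦ u • b` and `F : X → ℂ` is bounded. -/
theorem power_of_rank_one_perturbation
    {X : Type*} [NormedAddCommGroup X] [NormedSpace ℂ X]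
    (D : Submodule ℂ X) (A : D →ₗ[ℂ] X) (b : X) (F : X →L[ℂ] ℂ)
    (n : ℕ) (hn : 1 ≤ n) (x xn : X) (bv : ℕ → X)
    (hx : IterRel D A n x xn)
    (hb0 : bv 0 = b)
    (hb : ∀ m : ℕ, m ≤ n - 1 → IterRel D A m b (bv m)) :
    ∃ (w : X) (q : ℕ → ℂ),
      IterRel D (A + ((F.toLinearMap.comp D.subtype).smulRight b)) n x w ∧
      (∀ m : ℕ, m < n → ∃ z : X,
        IterRel D (A + ((F.toLinearMap.comp D.subtype).smulRight b)) (n - m - 1) x z ∧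
        q m = F z) ∧
      w = xn + ∑ m ∈ Finset.range n, q m • bv m :=
  power_of_rank_one_perturbation_general D A b F n x xn bv hx hb
end

section
/- Let A generate a C₀-semigroup (T(t))_{t≥0} on a Banach space X, let B ∈ L(ℂ,X), F ∈ L(X,ℂ), and fix τ > 0. Define S(τ)u = ∫_0^τ T(s)Bu ds and Δ(τ) = T(τ) + S(τ)F. Let g : (0,∞) → ℝ and suppose there exist k₀ ∈ ℕ and M₁, M₂ > 0 with M₁ g(kτ) ≤ g(k) ≤ M₂ g(kτ+s) for all k ≥ k₀ and s ∈ [0,τ). Then the state x of the sampled-data system, given by x((k+1)τ) = Δ(τ) x(kτ) and x(kτ+s) = Δ(s) x(kτ) for s ∈ [0,τ), satisfies ‖x(t)‖ = o(g(t)) as t → ∞ if and only if ‖Δ(τ)^k x⁰‖ = o(g(k)) as k → ∞. -/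
/-- Transference of decay rates between the sampled-data system and its discretization:
`‖x(t)‖ = o(g(t))` as `t → ∞` iff `‖Δ(τ)^k x⁰‖ = o(g(k))` as `k → ∞`. -/
theorem sampled_data_decay_iff_discrete_decay
    {X : Type*} [NormedAddCommGroup X] [NormedSpace ℂ X] [CompleteSpace X]
    (T : ℝ → X →L[ℂ] X) (hT0 : T 0 = 1)
    (hTsem : ∀ t s : ℝ, 0 ≤ t → 0 ≤ s → T (t + s) = (T t).comp (T s))
    (hTcont : ∀ v : X, ContinuousOn (fun t : ℝ => T t v) (Set.Ici 0))
    (B : ℂ →L[ℂ] X) (F : X →L[ℂ] ℂ) (τ : ℝ) (hτ : 0 < τ)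
    (Δτ : X →L[ℂ] X)
    (hΔτ : ∀ v : X, Δτ v = T τ v + ∫ s in (0 : ℝ)..τ, T s (B (F v)))
    (x0 : X) (x : ℝ → X) (hx0 : x 0 = x0)
    (hx : ∀ (k : ℕ) (s : ℝ), 0 ≤ s → s < τ →
      x (k * τ + s) = T s (x (k * τ)) + ∫ r in (0 : ℝ)..s, T r (B (F (x (k * τ)))))
    (hxstep : ∀ k : ℕ, x ((k + 1) * τ) = Δτ (x (k * τ)))
    (g : ℝ → ℝ) (k₀ : ℕ) (M₁ M₂ : ℝ) (hM₁ : 0 < M₁) (hM₂ : 0 < M₂)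
    (hg : ∀ k : ℕ, k₀ ≤ k → ∀ s : ℝ, 0 ≤ s → s < τ →
      M₁ * g (k * τ) ≤ g k ∧ g k ≤ M₂ * g (k * τ + s)) :
    (∀ ε > (0 : ℝ), ∃ t₀ : ℝ, ∀ t : ℝ, t₀ ≤ t → ‖x t‖ ≤ ε * g t) ↔
    (∀ ε > (0 : ℝ), ∃ K : ℕ, ∀ k : ℕ, K ≤ k → ‖(Δτ ^ k) x0‖ ≤ ε * g k) := by
  -- the discrete samples
  have hxk : ∀ k : ℕ, x (k * τ) = (Δτ ^ k) x0 := by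
    intro k
    induction k with
    | zero => simpa using hx0
    | succ k ih =>
      have h := hxstep k
      push_cast at h ⊢
      rw [h, ih]
      simp [ContinuousLinearMap.mul_apply, Function.iterate_succ_apply']
  -- uniform bound on ‖T s‖ for s ∈ [0, τ]
  obtain ⟨C, hC⟩ : ∃ C : ℝ, ∀ s ∈ Set.Icc (0 : ℝ) τ, ‖T s‖ ≤ C := by
    have h := banach_steinhaus (g := fun i : Set.Icc (0 : ℝ) τ => T i) ?_
    · obtain ⟨C, hC⟩ := h
      exact ⟨C, fun s hs => hC ⟨s, hs⟩⟩
    · intro v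
      obtain ⟨C, hC⟩ := isCompact_Icc.exists_bound_of_continuousOn
        ((hTcont v).mono (Set.Icc_subset_Ici_self))
      exact ⟨C, fun i => hC i i.2⟩
  set C₁ : ℝ := max C 1 with hC₁def
  have hC₁pos : 0 < C₁ := lt_of_lt_of_le one_pos (le_max_right _ _)
  have hC₁ : ∀ s ∈ Set.Icc (0 : ℝ) τ, ‖T s‖ ≤ C₁ :=
    fun s hs => (hC s hs).trans (le_max_left _ _)
  set C' : ℝ := C₁ * (1 + τ * (‖B‖ * ‖F‖)) with hC'def
  have hC'pos : 0 < C' := by positivity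
  -- intersample bound
  have hbound : ∀ (k : ℕ) (s : ℝ), 0 ≤ s → s < τ →
      ‖x (k * τ + s)‖ ≤ C' * ‖x (k * τ)‖ := by
    intro k s hs0 hsτ
    rw [hx k s hs0 hsτ]
    set v := x ((k : ℝ) * τ) with hv
    have h1 : ‖T s v‖ ≤ C₁ * ‖v‖ :=
      le_trans ((T s).le_opNorm _)
        (mul_le_mul_of_nonneg_right (hC₁ s ⟨hs0, hsτ.le⟩) (norm_nonneg _))
    have h2 : ‖∫ r in (0 : ℝ)..s, T r (B (F v))‖ ≤ C₁ * (‖B‖ * (‖F‖ * ‖v‖)) * |s - 0| := by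
      apply intervalIntegral.norm_integral_le_of_norm_le_const
      intro r hr
      rw [Set.uIoc_of_le hs0] at hr
      have hr' : r ∈ Set.Icc (0 : ℝ) τ := ⟨hr.1.le, hr.2.trans hsτ.le⟩
      calc ‖T r (B (F v))‖ ≤ ‖T r‖ * ‖B (F v)‖ := (T r).le_opNorm _
        _ ≤ C₁ * (‖B‖ * (‖F‖ * ‖v‖)) := by
            apply mul_le_mul (hC₁ r hr') ?_ (norm_nonneg _) hC₁pos.le
            calc ‖B (F v)‖ ≤ ‖B‖ * ‖F v‖ := B.le_opNorm _
              _ ≤ ‖B‖ * (‖F‖ * ‖v‖) :=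
                  mul_le_mul_of_nonneg_left (F.le_opNorm _) (norm_nonneg _)
    have habs : |s - 0| = s := by rw [sub_zero, abs_of_nonneg hs0]
    rw [habs] at h2
    calc ‖T s v + ∫ r in (0 : ℝ)..s, T r (B (F v))‖
        ≤ ‖T s v‖ + ‖∫ r in (0 : ℝ)..s, T r (B (F v))‖ := norm_add_le _ _
      _ ≤ C₁ * ‖v‖ + C₁ * (‖B‖ * (‖F‖ * ‖v‖)) * s := add_le_add h1 h2
      _ ≤ C₁ * ‖v‖ + C₁ * (‖B‖ * (‖F‖ * ‖v‖)) * τ := by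
          have : (0:ℝ) ≤ C₁ * (‖B‖ * (‖F‖ * ‖v‖)) := by positivity
          nlinarith
      _ = C' * ‖v‖ := by rw [hC'def]; ring
  constructor
  · -- continuous decay ⇒ discrete decay
    intro h ε hε
    obtain ⟨t₀, ht₀⟩ := h (ε * M₁) (by positivity)
    refine ⟨max (⌈t₀ / τ⌉₊) k₀, fun k hk => ?_⟩
    have hk1 : ⌈t₀ / τ⌉₊ ≤ k := le_of_max_le_left hk
    have hk2 : k₀ ≤ k := le_of_max_le_right hk
    have hkt : t₀ ≤ (k : ℝ) * τ := by
      have h1 : t₀ / τ ≤ (⌈t₀ / τ⌉₊ : ℝ) := Nat.le_ceil _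
      have h2 : ((⌈t₀ / τ⌉₊ : ℕ) : ℝ) ≤ (k : ℝ) := by exact_mod_cast hk1
      rw [div_le_iff₀ hτ] at h1
      nlinarith
    have hxt := ht₀ ((k : ℝ) * τ) hkt
    have hg1 := (hg k hk2 0 le_rfl hτ).1
    calc ‖(Δτ ^ k) x0‖ = ‖x ((k : ℝ) * τ)‖ := by rw [hxk]
      _ ≤ ε * M₁ * g ((k : ℝ) * τ) := hxt
      _ = ε * (M₁ * g ((k : ℝ) * τ)) := by ring
      _ ≤ ε * g k := mul_le_mul_of_nonneg_left hg1 hε.le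
  · -- discrete decay ⇒ continuous decay
    intro h ε hε
    obtain ⟨K, hK⟩ := h (ε / (C' * M₂)) (by positivity)
    refine ⟨((max K k₀ + 1 : ℕ) : ℝ) * τ, fun t ht => ?_⟩
    have ht0 : 0 ≤ t := le_trans (by positivity) ht
    set k : ℕ := ⌊t / τ⌋₊ with hkdef
    have hkt : (k : ℝ) * τ ≤ t := by
      have := Nat.floor_le (show (0:ℝ) ≤ t / τ by positivity)
      rw [le_div_iff₀ hτ] at this
      simpa using this
    have htk : t < ((k : ℝ) + 1) * τ := by
      have h1 : t / τ < (k : ℝ) + 1 := Nat.lt_floor_add_one (t / τ)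
      rw [div_lt_iff₀ hτ] at h1
      linarith [h1]
    have hkk : max K k₀ + 1 ≤ k := by
      apply Nat.le_floor
      rw [le_div_iff₀ hτ]
      exact_mod_cast ht
    have hkK : K ≤ k := le_trans (le_trans (le_max_left _ _) (Nat.le_succ _)) hkk
    have hk0 : k₀ ≤ k := le_trans (le_trans (le_max_right _ _) (Nat.le_succ _)) hkk
    set s : ℝ := t - (k : ℝ) * τ with hsdef
    have hs0 : 0 ≤ s := by simp [hsdef]; linarith
    have hsτ : s < τ := by simp [hsdef]; linarith
    have hts : t = (k : ℝ) * τ + s := by ring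
    have hgk := (hg k hk0 s hs0 hsτ).2
    have hΔk := hK k hkK
    calc ‖x t‖ = ‖x ((k : ℝ) * τ + s)‖ := by rw [← hts]
      _ ≤ C' * ‖x ((k : ℝ) * τ)‖ := hbound k s hs0 hsτ
      _ = C' * ‖(Δτ ^ k) x0‖ := by rw [hxk]
      _ ≤ C' * (ε / (C' * M₂) * g k) := mul_le_mul_of_nonneg_left hΔk hC'pos.le
      _ = (ε / M₂) * g k := by field_simp
      _ ≤ (ε / M₂) * (M₂ * g ((k : ℝ) * τ + s)) :=
          mul_le_mul_of_nonneg_left hgk (by positivity)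
      _ = ε * g ((k : ℝ) * τ + s) := by field_simp
      _ = ε * g t := by rw [← hts]
end

section
/- Let ω, α, Υ > 0 and let λ be a complex number with Re λ < 0, |λ| ≥ κ > 0, satisfying either Re λ ≤ -ω or (λ ∉ ℝ and Re λ ≤ -Υ/|Im λ|^α). Then for every τ > 0 with τ·Re λ > -1, every z ∈ ℂ with |z| ≥ 1, and every α̃ ≥ α: |(1 - e^{τλ})/(z - e^{τλ})| · |1/λ| ≤ (e M₁/ω) in the first case, and ≤ (e M₁/(Υ κ^{α̃-α})) · |λ|^{α̃} in the second case, where M₁ = sup{|(1-e^μ)/μ| : -1 ≤ Re μ ≤ 0}. -/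
set_option maxHeartbeats 1000000 in
theorem eigenvalue_fraction_bound
    (ω α Υ κ τ α' : ℝ) (hω : 0 < ω) (hα : 0 < α) (hΥ : 0 < Υ) (hκ : 0 < κ)
    (hα' : α ≤ α') (hτ : 0 < τ)
    (l : ℂ) (hre : l.re < 0) (hκl : κ ≤ ‖l‖)
    (hcase : l.re ≤ -ω ∨ (l.im ≠ 0 ∧ l.re ≤ -Υ / |l.im| ^ α))
    (hτl : -1 < τ * l.re)
    (z : ℂ) (hz : 1 ≤ ‖z‖)
    (M₁ : ℝ)
    (hM₁ : M₁ = sSup {y : ℝ | ∃ μ : ℂ, μ ≠ 0 ∧ -1 ≤ μ.re ∧ μ.re ≤ 0 ∧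
      y = ‖(1 - Complex.exp μ) / μ‖}) :
    (l.re ≤ -ω →
      ‖(1 - Complex.exp (τ * l)) / (z - Complex.exp (τ * l))‖ *
          ‖1 / l‖ ≤ Real.exp 1 * M₁ / ω) ∧
    ((l.im ≠ 0 ∧ l.re ≤ -Υ / |l.im| ^ α) →
      ‖(1 - Complex.exp (τ * l)) / (z - Complex.exp (τ * l))‖ *
          ‖1 / l‖ ≤
        Real.exp 1 * M₁ / (Υ * κ ^ (α' - α)) * ‖l‖ ^ α') := by
  have hl0 : l ≠ 0 := fun h => by simp [h] at hre
  have habsl : 0 < ‖l‖ := norm_pos_iff.mpr hl0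
  have hμre : ((τ : ℂ) * l).re = τ * l.re := by simp
  have hμ0 : (τ : ℂ) * l ≠ 0 :=
    mul_ne_zero (by exact_mod_cast hτ.ne') hl0
  have habsμ : ‖(τ : ℂ) * l‖ = τ * ‖l‖ := by
    rw [norm_mul, Complex.norm_of_nonneg hτ.le]
  have hepos : (0 : ℝ) < Real.exp 1 := Real.exp_pos 1
  have he2 : (2 : ℝ) ≤ Real.exp 1 := by
    have := Real.add_one_le_exp (1 : ℝ); linarith
  -- the set is bounded above by 2
  have hbdd : BddAbove {y : ℝ | ∃ μ : ℂ, μ ≠ 0 ∧ -1 ≤ μ.re ∧ μ.re ≤ 0 ∧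
      y = ‖(1 - Complex.exp μ) / μ‖} := by
    refine ⟨2, ?_⟩
    rintro y ⟨μ, hμ, h1, h2, rfl⟩
    have hμpos : 0 < ‖μ‖ := norm_pos_iff.mpr hμ
    rw [norm_div, div_le_iff₀ hμpos]
    rcases le_or_gt (‖μ‖) 1 with h | h
    · have h' := Complex.norm_exp_sub_one_le h
      calc ‖1 - Complex.exp μ‖ = ‖Complex.exp μ - 1‖ := by
            rw [norm_sub_rev]
        _ ≤ 2 * ‖μ‖ := h'
    · calc ‖1 - Complex.exp μ‖
          ≤ ‖1‖ + ‖Complex.exp μ‖ := norm_sub_le 1 _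
        _ = 1 + Real.exp μ.re := by rw [Complex.norm_exp, norm_one]
        _ ≤ 1 + 1 := by
            have : Real.exp μ.re ≤ Real.exp 0 := Real.exp_le_exp.mpr h2
            simpa using this
        _ ≤ 2 * ‖μ‖ := by nlinarith
  -- M₁ bounds the value at μ = τ l
  have hmem : ‖(1 - Complex.exp ((τ : ℂ) * l)) / ((τ : ℂ) * l)‖ ∈
      {y : ℝ | ∃ μ : ℂ, μ ≠ 0 ∧ -1 ≤ μ.re ∧ μ.re ≤ 0 ∧
        y = ‖(1 - Complex.exp μ) / μ‖} := by
    refine ⟨(τ : ℂ) * l, hμ0, ?_, ?_, rfl⟩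
    · rw [hμre]; linarith
    · rw [hμre]; nlinarith
  have hM₁ge : ‖(1 - Complex.exp ((τ : ℂ) * l)) / ((τ : ℂ) * l)‖ ≤ M₁ := by
    rw [hM₁]; exact le_csSup hbdd hmem
  have hM₁0 : 0 ≤ M₁ := le_trans (norm_nonneg _) hM₁ge
  have hA : ‖1 - Complex.exp ((τ : ℂ) * l)‖ ≤ M₁ * (τ * ‖l‖) := by
    rw [norm_div, habsμ, div_le_iff₀ (by positivity)] at hM₁ge
    linarith
  -- lower bound on the denominator
  have hEabs : ‖Complex.exp ((τ : ℂ) * l)‖ = Real.exp (τ * l.re) := by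
    rw [Complex.norm_exp, hμre]
  have hxpos : 0 < -(τ * l.re) := by nlinarith
  have hexple : Real.exp (τ * l.re) ≤ 1 / (1 + -(τ * l.re)) := by
    have h1 : 1 + -(τ * l.re) ≤ Real.exp (-(τ * l.re)) := by
      have := Real.add_one_le_exp (-(τ * l.re)); linarith
    have h2 : Real.exp (τ * l.re) = 1 / Real.exp (-(τ * l.re)) := by
      rw [Real.exp_neg]; field_simp
    rw [h2]
    apply div_le_div_of_nonneg_left one_pos.le (by linarith) h1
  have hB : -(τ * l.re) / Real.exp 1 ≤ ‖z - Complex.exp ((τ : ℂ) * l)‖ := by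
    have htri : ‖z‖ ≤ ‖z - Complex.exp ((τ : ℂ) * l)‖ +
        ‖Complex.exp ((τ : ℂ) * l)‖ := by
      calc ‖z‖ = ‖(z - Complex.exp ((τ : ℂ) * l)) +
            Complex.exp ((τ : ℂ) * l)‖ := by ring_nf
        _ ≤ _ := norm_add_le _ _
    have h3 : 1 - Real.exp (τ * l.re) ≤ ‖z - Complex.exp ((τ : ℂ) * l)‖ := by
      rw [← hEabs]; linarith
    have h4 : -(τ * l.re) / Real.exp 1 ≤ 1 - Real.exp (τ * l.re) := by
      have h5 : 1 - 1 / (1 + -(τ * l.re)) = -(τ * l.re) / (1 + -(τ * l.re)) := by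
        field_simp
        ring
      have h6 : -(τ * l.re) / Real.exp 1 ≤ -(τ * l.re) / (1 + -(τ * l.re)) := by
        apply div_le_div_of_nonneg_left hxpos.le (by linarith)
        have : -(τ * l.re) ≤ 1 := by linarith
        linarith
      linarith
    linarith
  have hBpos : 0 < ‖z - Complex.exp ((τ : ℂ) * l)‖ :=
    lt_of_lt_of_le (by positivity) hB
  -- core estimate
  have hcore : ‖(1 - Complex.exp ((τ : ℂ) * l)) /
      (z - Complex.exp ((τ : ℂ) * l))‖ * ‖1 / l‖ ≤
      Real.exp 1 * M₁ / (-l.re) := by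
    rw [norm_div, norm_div, norm_one, div_mul_div_comm, mul_one]
    have hdd : (M₁ * (τ * ‖l‖)) / ((-(τ * l.re) / Real.exp 1) * ‖l‖) =
        Real.exp 1 * M₁ / (-l.re) := by
      have hτ0 : τ ≠ 0 := hτ.ne'
      have hl' : ‖l‖ ≠ 0 := habsl.ne'
      have hre0 : l.re ≠ 0 := hre.ne
      field_simp
    rw [← hdd]
    apply div_le_div₀ (by positivity) hA (by positivity)
    apply mul_le_mul_of_nonneg_right hB (norm_nonneg _)
  constructor
  · intro h
    refine le_trans hcore ?_
    have hωle : ω ≤ -l.re := by linarith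
    exact div_le_div_of_nonneg_left (by positivity) hω hωle
  · rintro ⟨him, hre2⟩
    refine le_trans hcore ?_
    have himpos : 0 < |l.im| := abs_pos.mpr him
    have hre2' : l.re ≤ -(Υ / |l.im| ^ α) := by rw [← neg_div]; exact hre2
    have hrepos : 0 < -l.re := by
      have hpα' : 0 < |l.im| ^ α := Real.rpow_pos_of_pos himpos α
      have : 0 < Υ / |l.im| ^ α := div_pos hΥ hpα'
      linarith
    obtain ⟨S, hSdef⟩ : ∃ S, S = |l.im| ^ α := ⟨_, rfl⟩
    obtain ⟨P, hPdef⟩ : ∃ P, P = ‖l‖ ^ α := ⟨_, rfl⟩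
    obtain ⟨Q, hQdef⟩ : ∃ Q, Q = ‖l‖ ^ (α' - α) := ⟨_, rfl⟩
    obtain ⟨R, hRdef⟩ : ∃ R, R = κ ^ (α' - α) := ⟨_, rfl⟩
    have hSpos : 0 < S := hSdef ▸ Real.rpow_pos_of_pos himpos α
    have hPpos : 0 < P := hPdef ▸ Real.rpow_pos_of_pos habsl α
    have hQpos : 0 < Q := hQdef ▸ Real.rpow_pos_of_pos habsl _
    have hRpos : 0 < R := hRdef ▸ Real.rpow_pos_of_pos hκ _
    have hSP : S ≤ P := by
      rw [hSdef, hPdef]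
      exact Real.rpow_le_rpow (abs_nonneg _) (Complex.abs_im_le_norm l) hα.le
    have hRQ : R ≤ Q := by
      rw [hRdef, hQdef]
      exact Real.rpow_le_rpow hκ.le hκl (by linarith)
    have h2 : Υ ≤ -l.re * S := by
      have h1 : Υ / S ≤ -l.re := by rw [hSdef]; linarith [hre2']
      rw [div_le_iff₀ hSpos] at h1; linarith
    have hsplit : ‖l‖ ^ α' = P * Q := by
      rw [hPdef, hQdef, ← Real.rpow_add habsl]; ring_nf
    rw [hsplit, hRdef.symm]
    have s1 : Real.exp 1 * M₁ / (-l.re) ≤ Real.exp 1 * M₁ * S / Υ := by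
      rw [div_le_div_iff₀ hrepos hΥ]
      nlinarith [mul_nonneg (mul_nonneg hepos.le hM₁0) (sub_nonneg.mpr h2)]
    have s2 : Real.exp 1 * M₁ * S / Υ ≤ Real.exp 1 * M₁ * P / Υ := by
      have hsp : Real.exp 1 * M₁ * S ≤ Real.exp 1 * M₁ * P := by
        nlinarith [mul_nonneg hepos.le hM₁0]
      exact div_le_div_of_nonneg_right hsp hΥ.le
    have s3 : Real.exp 1 * M₁ * P / Υ ≤ Real.exp 1 * M₁ / (Υ * R) * (P * Q) := by
      have hΥR : 0 < Υ * R := mul_pos hΥ hRpos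
      rw [div_mul_eq_mul_div, div_le_div_iff₀ hΥ hΥR]
      nlinarith [mul_nonneg (mul_nonneg (mul_nonneg (mul_nonneg hepos.le hM₁0) hPpos.le)
        (sub_nonneg.mpr hRQ)) hΥ.le]
    linarith
end
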